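/- With notation as above, for uniformly random A ∈ M_n and any ψ ∈ ℂ^{2ⁿ}, the random variable η_A = 2ⁿ|⟨φ_A|ψ⟩|² satisfies E[η_A²] ≤ 2‖ψ‖⁴, and hence Var(η_A) ≤ ‖ψ‖⁴. -/

import Mathlib

open scoped BigOperators ComplexConjugate

/-- Data parametrizing the set `M_n` of symmetric `n×n` integer matrices with
off-diagonal entries in `{0,1}` and diagonal entries in `{0,1,2,3}`. -/
abbrev Mdata (n : ℕ) := (Fin n → Fin 4) × (Fin n → Fin n → Bool)

/-- The matrix in `M_n` corresponding to the data `D`. -/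
def mdataMatrix {n : ℕ} (D : Mdata n) : Matrix (Fin n) (Fin n) ℤ :=
  Matrix.of fun i j =>
    if i = j then (D.1 i : ℤ) else (if D.2 (min i j) (max i j) then 1 else 0)

/-- The equatorial state `|φ_A⟩ = 2^{−n/2} Σ_x i^{xAxᵀ} |x⟩` for `A = mdataMatrix D`. -/
noncomputable def equatorial {n : ℕ} (D : Mdata n) : (Fin n → Bool) → ℂ :=
  fun x => ((Real.sqrt (2 ^ n) : ℝ) : ℂ)⁻¹ *
    Complex.I ^ (∑ i, ∑ j,
      (if x i then 1 else 0 : ℤ) * mdataMatrix D i j * (if x j then 1 else 0))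

/-!
Since bits satisfy `xᵢ² = xᵢ`, `xAxᵀ = Σᵢ dᵢxᵢ + 2 Σ_{i<j} bᵢⱼxᵢxⱼ`. Hence
`i^{yAyᵀ − wAwᵀ + zAzᵀ − xAxᵀ}` is a product of characters of the independent uniform entries
`dᵢ ∈ Fin 4` and `bᵢⱼ ∈ Bool`, and its average over `A` is the indicator of
`4 ∣ yᵢ − wᵢ + zᵢ − xᵢ` for all `i` and `2 ∣ yᵢyⱼ − wᵢwⱼ + zᵢzⱼ − xᵢxⱼ` for all `i < j`.
For bit vectors the first condition says `{yᵢ, zᵢ} = {wᵢ, xᵢ}` in every coordinate, and the second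
forbids mixing: a coordinate matched only by the swap together with one matched only by the identity
gives the odd cross term `−(wᵢ − xᵢ)(wⱼ − xⱼ)`. So the average is the indicator of
`(y, z) ∈ {(w, x), (x, w)}`, which gives `E[η²] = 2‖ψ‖⁴ − Σₓ |ψₓ|⁴`, and in the same way
`E[η] = ‖ψ‖²`.
-/

open Complex (I)

theorem zpow_sum₀ {ι G₀ : Type*} [CommGroupWithZero G₀] {a : G₀} (ha : a ≠ 0) (s : Finset ι)
    (f : ι → ℤ) : a ^ (∑ i ∈ s, f i) = ∏ i ∈ s, a ^ f i := by
  induction s using Finset.cons_induction with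
  | empty => simp
  | cons i s hi ih => rw [Finset.sum_cons, Finset.prod_cons, zpow_add₀ ha, ih]

theorem IsPrimitiveRoot.sum_fin_zpow_mul {K : Type*} [Field K] {ζ : K} {k : ℕ}
    (hζ : IsPrimitiveRoot ζ k) (m : ℤ) :
    ∑ v : Fin k, ζ ^ ((v : ℤ) * m) = if (k : ℤ) ∣ m then (k : K) else 0 := by
  have hpow : ∀ v : Fin k, ζ ^ ((v : ℤ) * m) = (ζ ^ m) ^ (v : ℕ) := fun v => by
    rw [mul_comm, zpow_mul, zpow_natCast]
  simp only [hpow, Fin.sum_univ_eq_sum_range (fun i => (ζ ^ m) ^ i)]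
  split_ifs with hm
  · simp [(hζ.zpow_eq_one_iff_dvd m).2 hm]
  · have hne : ζ ^ m - 1 ≠ 0 := sub_ne_zero.2 fun h => hm ((hζ.zpow_eq_one_iff_dvd m).1 h)
    have hk : (ζ ^ m) ^ k = 1 := by
      rw [← zpow_natCast, ← zpow_mul, mul_comm, zpow_mul, hζ.zpow_eq_one, one_zpow]
    exact (mul_eq_zero.1 (by rw [geom_sum_mul, hk, sub_self])).resolve_right hne

theorem Fintype.sum_pi_prod_eq_ite {ι : Type*} [Fintype ι] [DecidableEq ι] {α : ι → Type*}
    [∀ i, Fintype (α i)] {R : Type*} [CommSemiring R] (g : ∀ i, α i → R) (p : ι → Prop)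
    [DecidablePred p] [Decidable (∀ i, p i)]
    (hg : ∀ i, ∑ a, g i a = if p i then (Fintype.card (α i) : R) else 0) :
    ∑ f : ∀ i, α i, ∏ i, g i (f i) = if ∀ i, p i then (Fintype.card (∀ i, α i) : R) else 0 := by
  rw [← Fintype.prod_sum, Fintype.prod_congr _ _ hg, Fintype.prod_ite_zero, Fintype.card_pi,
    Nat.cast_prod]
  congr

theorem Fintype.sum_sum_ite_eq_or_swap {α R : Type*} [Fintype α] [DecidableEq α] [AddCommGroup R]
    (f : α → α → R) (w x : α) :
    ∑ y, ∑ z, (if (w = y ∧ x = z) ∨ (w = z ∧ x = y) then f y z else 0) =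
      f w x + f x w - if w = x then f w w else 0 := by
  have hsplit : ∀ y z, (if (w = y ∧ x = z) ∨ (w = z ∧ x = y) then f y z else 0) =
      (if w = y ∧ x = z then f y z else 0) + (if x = y ∧ w = z then f y z else 0)
        - if w = x ∧ w = y ∧ w = z then f y z else 0 := by
    intro y z
    split_ifs <;> first | (exfalso; grind) | abel
  simp [hsplit, Finset.sum_add_distrib, Finset.sum_sub_distrib, ite_and, Finset.sum_ite_eq]

theorem Complex.norm_sum_mul_sq {α : Type*} [Fintype α] (e ψ : α → ℂ) :
    (‖∑ x, e x * ψ x‖ : ℂ) ^ 2 = ∑ x, ∑ y, e x * conj (e y) * (ψ x * conj (ψ y)) := by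
  rw [← Complex.mul_conj', map_sum, Finset.sum_mul_sum]
  exact Finset.sum_congr rfl fun x _ => Finset.sum_congr rfl fun y _ => by rw [map_mul]; ring

theorem Complex.norm_sum_mul_sq_sq {α : Type*} [Fintype α] (e ψ : α → ℂ) :
    ((‖∑ x, e x * ψ x‖ : ℂ) ^ 2) ^ 2 = ∑ w, ∑ x, ∑ y, ∑ z,
      e w * conj (e y) * (e x * conj (e z)) * (ψ w * conj (ψ y) * (ψ x * conj (ψ z))) := by
  rw [sq, Complex.norm_sum_mul_sq, Finset.sum_mul_sum]
  refine Finset.sum_congr rfl fun w _ => Finset.sum_congr rfl fun x _ => ?_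
  rw [Finset.sum_mul_sum]
  exact Finset.sum_congr rfl fun y _ => Finset.sum_congr rfl fun z _ => by ring

namespace Equatorial

variable {n : ℕ}

def bit (b : Bool) : ℤ := if b then 1 else 0

def quadForm (D : Mdata n) (x : Fin n → Bool) : ℤ :=
  ∑ i, ∑ j, bit (x i) * mdataMatrix D i j * bit (x j)

def pairing (D : Mdata n) (u : Fin n → ℤ) (v : Fin n → Fin n → ℤ) : ℤ :=
  ∑ i, (D.1 i : ℤ) * u i + 2 * ∑ i, ∑ j, bit (D.2 i j) * v i j

lemma pairing_add (D : Mdata n) (u u' : Fin n → ℤ) (v v' : Fin n → Fin n → ℤ) :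
    pairing D (u + u') (v + v') = pairing D u v + pairing D u' v' := by
  simp only [pairing, Pi.add_apply, mul_add, Finset.sum_add_distrib]
  ring

lemma pairing_sub (D : Mdata n) (u u' : Fin n → ℤ) (v v' : Fin n → Fin n → ℤ) :
    pairing D (u - u') (v - v') = pairing D u v - pairing D u' v' := by
  simp only [pairing, Pi.sub_apply, mul_sub, Finset.sum_sub_distrib]
  ring

def bits (x : Fin n → Bool) : Fin n → ℤ := fun i => bit (x i)

def upperProducts (x : Fin n → Bool) : Fin n → Fin n → ℤ :=
  fun i j => if i < j then bit (x i) * bit (x j) else 0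

lemma mdataMatrix_apply (D : Mdata n) (i j : Fin n) :
    mdataMatrix D i j = if i = j then (D.1 i : ℤ) else bit (D.2 (min i j) (max i j)) := rfl

lemma bit_mul_mdataMatrix_mul_bit (D : Mdata n) (x : Fin n → Bool) (i j : Fin n) :
    bit (x i) * mdataMatrix D i j * bit (x j) =
      (if i = j then (D.1 i : ℤ) * bit (x i) else 0)
        + bit (D.2 i j) * upperProducts x i j + bit (D.2 j i) * upperProducts x j i := by
  rcases lt_trichotomy i j with h | rfl | h
  · simp only [mdataMatrix_apply, upperProducts, h, h.ne, h.not_gt, min_eq_left h.le,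
      max_eq_right h.le, if_true, if_false]
    ring
  · cases x i <;> simp [mdataMatrix_apply, upperProducts, bit]
  · simp only [mdataMatrix_apply, upperProducts, h, h.ne', h.not_gt, min_eq_right h.le,
      max_eq_left h.le, if_true, if_false]
    ring

lemma quadForm_eq_pairing (D : Mdata n) (x : Fin n → Bool) :
    quadForm D x = pairing D (bits x) (upperProducts x) := by
  have hswap : ∑ i, ∑ j, bit (D.2 j i) * upperProducts x j i
      = ∑ i, ∑ j, bit (D.2 i j) * upperProducts x i j := Finset.sum_comm
  simp only [quadForm, bit_mul_mdataMatrix_mul_bit, Finset.sum_add_distrib, hswap,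
    Finset.sum_ite_eq, Finset.mem_univ, if_true, pairing, bits]
  ring

lemma quadForm_sub_add_sub (D : Mdata n) (w x y z : Fin n → Bool) :
    quadForm D y - quadForm D w + (quadForm D z - quadForm D x) =
      pairing D (bits y - bits w + (bits z - bits x))
        (upperProducts y - upperProducts w + (upperProducts z - upperProducts x)) := by
  simp only [quadForm_eq_pairing, pairing_add, pairing_sub]

lemma sum_bool_neg_one_zpow_mul (m : ℤ) :
    ∑ b : Bool, (-1 : ℂ) ^ (bit b * m) = if 2 ∣ m then (Fintype.card Bool : ℂ) else 0 := by
  have h := (IsPrimitiveRoot.neg_one (R := ℂ) 0 (by norm_num)).sum_fin_zpow_mul m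
  simp only [Fin.sum_univ_two, Fin.val_zero, Fin.val_one] at h
  simpa [bit, add_comm] using h

lemma I_zpow_pairing (D : Mdata n) (u : Fin n → ℤ) (v : Fin n → Fin n → ℤ) :
    I ^ pairing D u v =
      (∏ i, I ^ ((D.1 i : ℤ) * u i)) * ∏ i, ∏ j, (-1 : ℂ) ^ (bit (D.2 i j) * v i j) := by
  have hI2 : I ^ (2 : ℤ) = -1 := by rw [zpow_two, Complex.I_mul_I]
  have hne : (-1 : ℂ) ≠ 0 := by norm_num
  rw [pairing, zpow_add₀ Complex.I_ne_zero, zpow_mul, hI2, zpow_sum₀ Complex.I_ne_zero,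
    zpow_sum₀ hne]
  simp only [zpow_sum₀ hne]

lemma sum_I_zpow_pairing (u : Fin n → ℤ) (v : Fin n → Fin n → ℤ) :
    ∑ D : Mdata n, I ^ pairing D u v =
      if (∀ i, 4 ∣ u i) ∧ ∀ i j, 2 ∣ v i j then (Fintype.card (Mdata n) : ℂ) else 0 := by
  have hdiag : ∑ d : Fin n → Fin 4, ∏ i, I ^ ((d i : ℤ) * u i) =
      if ∀ i, 4 ∣ u i then (Fintype.card (Fin n → Fin 4) : ℂ) else 0 :=
    Fintype.sum_pi_prod_eq_ite (fun i (a : Fin 4) => I ^ ((a : ℤ) * u i)) (fun i => 4 ∣ u i)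
      fun i => by simpa using Complex.isPrimitiveRoot_I.sum_fin_zpow_mul (u i)
  have hoff : ∑ b : Fin n → Fin n → Bool, ∏ i, ∏ j, (-1 : ℂ) ^ (bit (b i j) * v i j) =
      if ∀ i j, 2 ∣ v i j then (Fintype.card (Fin n → Fin n → Bool) : ℂ) else 0 := by
    have hrow : ∀ i, ∑ r : Fin n → Bool, ∏ j, (-1 : ℂ) ^ (bit (r j) * v i j) =
        if ∀ j, 2 ∣ v i j then (Fintype.card (Fin n → Bool) : ℂ) else 0 := fun i =>
      Fintype.sum_pi_prod_eq_ite _ (fun j => 2 ∣ v i j) fun j => sum_bool_neg_one_zpow_mul (v i j)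
    exact Fintype.sum_pi_prod_eq_ite _ (fun i => ∀ j, 2 ∣ v i j) hrow
  simp only [I_zpow_pairing, Fintype.sum_prod_type, ← Finset.sum_mul_sum, hdiag, hoff,
    ite_zero_mul_ite_zero, Fintype.card_prod, Nat.cast_mul]

lemma eq_or_swap_of_four_dvd (a b c d : Bool) (h : 4 ∣ bit c - bit a + (bit d - bit b)) :
    (a = c ∧ b = d) ∨ (a = d ∧ b = c) := by
  revert h; cases a <;> cases b <;> cases c <;> cases d <;> decide

lemma odd_bit_sub_bit {a b : Bool} (h : a ≠ b) : Odd (bit a - bit b) := by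
  cases a <;> cases b <;> first | exact absurd rfl h | decide

lemma dvd_bits_upperProducts_iff (w x y z : Fin n → Bool) :
    ((∀ i, 4 ∣ (bits y - bits w + (bits z - bits x)) i) ∧
        ∀ i j, 2 ∣ (upperProducts y - upperProducts w + (upperProducts z - upperProducts x)) i j) ↔
      (w = y ∧ x = z) ∨ (w = z ∧ x = y) := by
  constructor
  · rintro ⟨hm, hk⟩
    have hpair : ∀ i, (w i = y i ∧ x i = z i) ∨ (w i = z i ∧ x i = y i) := fun i =>
      eq_or_swap_of_four_dvd _ _ _ _ (by simpa [bits] using hm i)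
    simp only [funext_iff, ← forall_and]
    by_contra h
    rw [not_or, not_forall, not_forall] at h
    obtain ⟨⟨i, hi⟩, ⟨j, hj⟩⟩ := h
    obtain ⟨hwz, hxy⟩ := (hpair i).resolve_left hi
    obtain ⟨hwy, hxz⟩ := (hpair j).resolve_right hj
    have hwxi : w i ≠ x i := fun h => hi ⟨h ▸ hxy, h ▸ hwz⟩
    have hwxj : w j ≠ x j := fun h => hj ⟨h ▸ hxz, h ▸ hwy⟩
    have hij : i ≠ j := by rintro rfl; exact hi ⟨hwy, hxz⟩
    have hcross : 2 ∣ bit (y i) * bit (y j) - bit (w i) * bit (w j)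
        + (bit (z i) * bit (z j) - bit (x i) * bit (x j)) := by
      rcases hij.lt_or_gt with h | h
      · simpa [upperProducts, h] using hk i j
      · have := hk j i
        simp only [Pi.sub_apply, Pi.add_apply, upperProducts, h, if_true] at this
        convert this using 1
        ring
    rw [← hwz, ← hxy, ← hwy, ← hxz,
      show ∀ a b c d : ℤ, a * d - c * d + (c * b - a * b) = -((c - a) * (d - b)) by
        intros; ring] at hcross
    exact Int.not_even_iff_odd.2 ((odd_bit_sub_bit hwxi).mul (odd_bit_sub_bit hwxj)).neg
      (even_iff_two_dvd.2 hcross)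
  · rintro (⟨rfl, rfl⟩ | ⟨rfl, rfl⟩) <;> simp

lemma sum_I_zpow_quadForm (w x y z : Fin n → Bool) :
    ∑ D : Mdata n, I ^ (quadForm D y - quadForm D w + (quadForm D z - quadForm D x)) =
      if (w = y ∧ x = z) ∨ (w = z ∧ x = y) then (Fintype.card (Mdata n) : ℂ) else 0 := by
  simp only [quadForm_sub_add_sub, sum_I_zpow_pairing]
  exact if_congr (dvd_bits_upperProducts_iff w x y z) rfl rfl

lemma sum_I_zpow_quadForm_sub (x y : Fin n → Bool) :
    ∑ D : Mdata n, I ^ (quadForm D y - quadForm D x) =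
      if x = y then (Fintype.card (Mdata n) : ℂ) else 0 := by
  simpa using sum_I_zpow_quadForm x x y x

lemma conj_I_zpow (k : ℤ) : conj (I ^ k) = I ^ (-k) := by
  rw [map_zpow₀, Complex.conj_I, ← Complex.inv_I, inv_zpow, zpow_neg]

lemma I_zpow_neg_mul_conj (a b : ℤ) : I ^ (-a) * conj (I ^ (-b)) = I ^ (b - a) := by
  rw [conj_I_zpow, neg_neg, ← zpow_add₀ Complex.I_ne_zero, neg_add_eq_sub]

lemma conj_equatorial (D : Mdata n) (x : Fin n → Bool) :
    conj (equatorial D x) = ((√(2 ^ n) : ℝ) : ℂ)⁻¹ * I ^ (-quadForm D x) := by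
  simp only [equatorial, map_mul, map_inv₀, Complex.conj_ofReal, conj_I_zpow]
  rfl

variable (ψ : (Fin n → Bool) → ℂ)

noncomputable def amplitude (D : Mdata n) : ℂ := ∑ x, I ^ (-quadForm D x) * ψ x

lemma two_pow_mul_norm_sum_conj_equatorial_mul_sq (D : Mdata n) :
    2 ^ n * ‖∑ x, conj (equatorial D x) * ψ x‖ ^ 2 = ‖amplitude ψ D‖ ^ 2 := by
  have hsum : ∑ x, conj (equatorial D x) * ψ x = ((√(2 ^ n) : ℝ) : ℂ)⁻¹ * amplitude ψ D := by
    simp only [conj_equatorial, amplitude, Finset.mul_sum, mul_assoc]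
  rw [hsum, norm_mul, norm_inv, Complex.norm_real, Real.norm_of_nonneg (Real.sqrt_nonneg _),
    mul_pow, inv_pow, Real.sq_sqrt (by positivity)]
  field_simp

lemma sum_norm_amplitude_sq :
    ∑ D : Mdata n, ‖amplitude ψ D‖ ^ 2 = Fintype.card (Mdata n) * ∑ x, ‖ψ x‖ ^ 2 := by
  apply Complex.ofReal_injective
  push_cast
  simp only [amplitude, Complex.norm_sum_mul_sq, I_zpow_neg_mul_conj,
    Finset.sum_comm (s := (Finset.univ : Finset (Mdata n))), ← Finset.sum_mul,
    sum_I_zpow_quadForm_sub]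
  simp only [ite_mul, zero_mul, Finset.sum_ite_eq, Finset.mem_univ, if_true, Complex.mul_conj',
    Finset.mul_sum]

lemma sum_norm_amplitude_sq_sq :
    ∑ D : Mdata n, (‖amplitude ψ D‖ ^ 2) ^ 2 =
      Fintype.card (Mdata n) * (2 * (∑ x, ‖ψ x‖ ^ 2) ^ 2 - ∑ x, (‖ψ x‖ ^ 2) ^ 2) := by
  apply Complex.ofReal_injective
  push_cast
  simp only [amplitude, Complex.norm_sum_mul_sq_sq, I_zpow_neg_mul_conj,
    ← zpow_add₀ Complex.I_ne_zero, Finset.sum_comm (s := (Finset.univ : Finset (Mdata n))),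
    ← Finset.sum_mul, sum_I_zpow_quadForm]
  simp only [ite_mul, zero_mul, ← Finset.mul_sum, Fintype.sum_sum_ite_eq_or_swap,
    Finset.sum_sub_distrib, Finset.sum_add_distrib, Finset.sum_ite_eq, Finset.mem_univ, if_true]
  have hswap : ∀ w x, ψ w * conj (ψ x) * (ψ x * conj (ψ w)) =
      ψ w * conj (ψ w) * (ψ x * conj (ψ x)) := fun _ _ => by ring
  simp only [hswap, Complex.mul_conj', ← Finset.mul_sum, ← Finset.sum_mul, ← sq]
  ring

end Equatorial

/-- Second-moment bound for the norm estimator `η_A = 2ⁿ|⟨φ_A|ψ⟩|²` over uniformly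
random equatorial states: `E[η²] ≤ 2‖ψ‖⁴` and `Var(η) ≤ ‖ψ‖⁴`. -/
theorem equatorial_second_moment (n : ℕ) (ψ : (Fin n → Bool) → ℂ) :
    let η : Mdata n → ℝ := fun D => 2 ^ n * ‖∑ x, conj (equatorial D x) * ψ x‖ ^ 2
    ((Fintype.card (Mdata n) : ℝ))⁻¹ * (∑ D : Mdata n, η D ^ 2)
        ≤ 2 * (∑ x, ‖ψ x‖ ^ 2) ^ 2
    ∧ ((Fintype.card (Mdata n) : ℝ))⁻¹ * (∑ D : Mdata n, η D ^ 2)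
          - (((Fintype.card (Mdata n) : ℝ))⁻¹ * ∑ D : Mdata n, η D) ^ 2
        ≤ (∑ x, ‖ψ x‖ ^ 2) ^ 2 := by
  intro η
  have hη : ∀ D, η D = ‖Equatorial.amplitude ψ D‖ ^ 2 :=
    Equatorial.two_pow_mul_norm_sum_conj_equatorial_mul_sq ψ
  have hcard : (0 : ℝ) < Fintype.card (Mdata n) := Nat.cast_pos.2 Fintype.card_pos
  have hfourth : 0 ≤ ∑ x, (‖ψ x‖ ^ 2) ^ 2 := by positivity
  simp only [hη, Equatorial.sum_norm_amplitude_sq, Equatorial.sum_norm_amplitude_sq_sq,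
    inv_mul_cancel_left₀ hcard.ne']
  constructor <;> linarith
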